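/- arXiv:math/0608662 — 2 statements merged into one kernel-verified Lean document; each statement's English description precedes it below -/
import Mathlib

section
/- For λ_1 ∈ ℂ, the set B = {π_n(λ_1, μ_1, …, μ_{n-1}) : μ_1, …, μ_{n-1} ∈ ℂ} equals {(λ_1 + z_1, λ_1 z_1 + z_2, …, λ_1 z_{n-2} + z_{n-1}, λ_1 z_{n-1}) : z_1, …, z_{n-1} ∈ ℂ}, and this set is a complex affine hyperplane in ℂⁿ. -/
open Metric Finset

/-- The map whose `k`-th component is the `(k+1)`-st elementary symmetric polynomial. -/
noncomputable def symPoly (n : ℕ) (μ : Fin n → ℂ) : Fin n → ℂ :=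
  fun k => ∑ s ∈ Finset.powersetCard ((k : ℕ) + 1) Finset.univ, ∏ i ∈ s, μ i

/-- The symmetrized `n`-disc `𝔾ₙ = πₙ(𝔻ⁿ)`. -/
def symPolydisc (n : ℕ) : Set (Fin n → ℂ) :=
  {z | ∃ μ : Fin n → ℂ, (∀ i, ‖μ i‖ < 1) ∧ symPoly n μ = z}

/-!
Splitting off the first variable gives `e_{k+1}(λ₁, μ) = λ₁ e_k(μ) + e_{k+1}(μ)`, so `B` is the
image of `π_{n-1}(ℂ^{n-1})` under `z ↦ (λ₁ z_{k-1} + z_k)_k` (with `z_0 = 1`, `z_n = 0`), and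
`π_{n-1}` is onto because every monic polynomial over `ℂ` splits (Vieta). That image consists of
the coefficient vectors of `(X + λ₁) · q` for monic `q` of degree `n - 1`, i.e. of the monic
polynomials `X^n + w_1 X^{n-1} + ⋯ + w_n` vanishing at `-λ₁`: a single linear equation
`∑ w_k (-λ₁)^{n-k} = -(-λ₁)^n`, whose coefficient of `w_n` is `1`.
-/

namespace Multiset

variable {R : Type*} [CommSemiring R]

theorem esymm_zero (s : Multiset R) : s.esymm 0 = 1 := by
  simp [esymm]

theorem esymm_eq_zero_of_card_lt {s : Multiset R} {k : ℕ} (h : card s < k) : s.esymm k = 0 := by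
  rw [esymm, powersetCard_eq_empty _ h, map_zero, sum_zero]

theorem esymm_cons_succ (a : R) (s : Multiset R) (k : ℕ) :
    (a ::ₘ s).esymm (k + 1) = a * s.esymm k + s.esymm (k + 1) := by
  simp only [esymm, powersetCard_cons, map_add, sum_add, map_map, Function.comp_def, prod_cons,
    sum_map_mul_left]
  ring

theorem exists_fin_map_univ_eq {α : Type*} {n : ℕ} (s : Multiset α) (h : card s = n) :
    ∃ f : Fin n → α, univ.val.map f = s := by
  induction s using Quotient.inductionOn with
  | h l =>
    rw [quot_mk_to_coe] at h ⊢
    rw [coe_card] at h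
    subst h
    exact ⟨l.get, by rw [Fin.univ_val_map, List.ofFn_get]⟩

open Polynomial in
theorem exists_card_eq_and_esymm_eq {K : Type*} [Field K] [IsAlgClosed K] (n : ℕ) (e : Fin n → K) :
    ∃ s : Multiset K, card s = n ∧ ∀ k : Fin n, s.esymm (k + 1) = e k := by
  set p : K[X] := X ^ n + ∑ i : Fin n, C ((-1) ^ (n - (i : ℕ)) * e i.rev) * X ^ (i : ℕ)
  have hmonic : p.Monic := monic_X_pow_add (degree_sum_fin_lt _)
  have hdeg : p.natDegree = n := by
    rw [natDegree_add_eq_left_of_degree_lt (by rw [degree_X_pow]; exact degree_sum_fin_lt _),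
      natDegree_X_pow]
  have hsplit : p.Splits := IsAlgClosed.splits p
  refine ⟨p.roots, by rw [← hsplit.natDegree_eq_card_roots, hdeg], fun k => ?_⟩
  have hvieta := coeff_eq_esymm_roots_of_splits hsplit (k := k.rev) (by omega)
  have hcoeff : p.coeff k.rev = (-1) ^ (n - (k.rev : ℕ)) * e k := by
    simp only [p, coeff_add, coeff_X_pow, if_neg k.rev.is_lt.ne, zero_add, finsetSum_coeff,
      coeff_C_mul_X_pow, Fin.val_inj, Finset.sum_ite_eq, Finset.mem_univ, if_true, Fin.rev_rev]
  rw [hcoeff, hmonic.leadingCoeff, one_mul, hdeg, Fin.val_rev,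
    Nat.sub_sub_self (Nat.succ_le_of_lt k.is_lt)] at hvieta
  exact (mul_left_cancel₀ (pow_ne_zero _ (neg_ne_zero.mpr one_ne_zero)) hvieta).symm

end Multiset

section ShiftAdd

variable {R : Type*} [CommRing R]

/-- The coefficients of `X ^ (n + 1), …, X` in `(X + a) * ∑ j, c j * X ^ (n + 1 - j)`. -/
def shiftAdd {n : ℕ} (a : R) (c : Fin (n + 2) → R) : Fin (n + 1) → R :=
  fun k => a * c k.castSucc + c k.succ

theorem sum_shiftAdd_mul_neg_pow (a : R) :
    ∀ {n : ℕ} (c : Fin (n + 2) → R),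
      ∑ k : Fin (n + 1), shiftAdd a c k * (-a) ^ (n - (k : ℕ)) =
        c (Fin.last _) - c 0 * (-a) ^ (n + 1)
  | 0, c => by simp [shiftAdd]; ring
  | n + 1, c => by
    have ih := sum_shiftAdd_mul_neg_pow a (fun i => c i.castSucc)
    have hterm (k : Fin (n + 1)) : shiftAdd a c k.castSucc * (-a) ^ (n + 1 - (k.castSucc : ℕ)) =
        shiftAdd a (fun i => c i.castSucc) k * (-a) ^ (n - (k : ℕ)) * (-a) := by
      rw [Fin.val_castSucc, Nat.sub_add_comm (Nat.le_of_lt_succ k.2), pow_succ, shiftAdd, shiftAdd,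
        Fin.succ_castSucc, mul_assoc]
    rw [Fin.sum_univ_castSucc, Finset.sum_congr rfl fun k _ => hterm k, ← Finset.sum_mul, ih]
    simp only [shiftAdd, Fin.val_last, Nat.sub_self, pow_zero, mul_one, Fin.succ_last,
      Fin.castSucc_zero]
    ring

theorem exists_shiftAdd_eq (a : R) :
    ∀ {n : ℕ} (w : Fin (n + 1) → R), ∃ c : Fin (n + 2) → R, c 0 = 1 ∧ shiftAdd a c = w
  | 0, w => ⟨![1, w 0 - a], rfl, funext fun k => by fin_cases k; simp [shiftAdd]⟩
  | n + 1, w => by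
    obtain ⟨c, hc0, hc⟩ := exists_shiftAdd_eq a (Fin.init w)
    refine ⟨Fin.snoc c (w (Fin.last _) - a * c (Fin.last _)), ?_, funext fun k => ?_⟩
    · rw [← Fin.castSucc_zero, Fin.snoc_castSucc, hc0]
    induction k using Fin.lastCases with
    | last => simp [shiftAdd]
    | cast j =>
      have hj := congrFun hc j
      rw [shiftAdd, Fin.init] at hj
      rw [shiftAdd, Fin.succ_castSucc, Fin.snoc_castSucc, Fin.snoc_castSucc, hj]

theorem setOf_shiftAdd_cons_one_snoc_zero (a : R) (n : ℕ) :
    {w | ∃ z : Fin n → R, w = shiftAdd a (Fin.cons 1 (Fin.snoc z 0))} =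
      {w : Fin (n + 1) → R | ∑ k, w k * (-a) ^ (n - (k : ℕ)) = -(-a) ^ (n + 1)} := by
  ext w
  constructor
  · rintro ⟨z, rfl⟩
    rw [Set.mem_ofPred_eq, sum_shiftAdd_mul_neg_pow, ← Fin.succ_last]
    simp
  · intro hw
    obtain ⟨c, hc0, rfl⟩ := exists_shiftAdd_eq a w
    have hlast : c (Fin.last _) = 0 := by
      rw [Set.mem_ofPred_eq, sum_shiftAdd_mul_neg_pow, hc0] at hw
      linear_combination hw
    refine ⟨Fin.init (Fin.tail c), ?_⟩
    conv_lhs => rw [← Fin.cons_self_tail c, ← Fin.snoc_init_self (Fin.tail c)]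
    rw [hc0, Fin.tail, Fin.succ_last, hlast]

end ShiftAdd

theorem symPoly_apply {n : ℕ} (μ : Fin n → ℂ) (k : Fin n) :
    symPoly n μ k = (univ.val.map μ).esymm (k + 1) :=
  (esymm_map_val μ univ _).symm

theorem symPoly_surjective (n : ℕ) : Function.Surjective (symPoly n) := by
  intro e
  obtain ⟨s, hcard, hs⟩ := Multiset.exists_card_eq_and_esymm_eq n e
  obtain ⟨μ, hμ⟩ := s.exists_fin_map_univ_eq hcard
  exact ⟨μ, funext fun k => by rw [symPoly_apply, hμ, hs]⟩

theorem cons_one_snoc_symPoly_zero_apply {n : ℕ} (μ : Fin n → ℂ) (j : Fin (n + 2)) :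
    (Fin.cons 1 (Fin.snoc (symPoly n μ) 0) : Fin (n + 2) → ℂ) j = (univ.val.map μ).esymm j := by
  induction j using Fin.cases with
  | zero => simp [Multiset.esymm_zero]
  | succ i =>
    induction i using Fin.lastCases with
    | last =>
      rw [Fin.cons_succ, Fin.snoc_last, Multiset.esymm_eq_zero_of_card_lt (by simp)]
    | cast j => rw [Fin.cons_succ, Fin.snoc_castSucc, symPoly_apply]; rfl

theorem symPoly_cons {n : ℕ} (a : ℂ) (μ : Fin n → ℂ) :
    symPoly (n + 1) (Fin.cons a μ) = shiftAdd a (Fin.cons 1 (Fin.snoc (symPoly n μ) 0)) := by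
  funext k
  rw [symPoly_apply, shiftAdd, cons_one_snoc_symPoly_zero_apply, cons_one_snoc_symPoly_zero_apply,
    Fin.univ_val_map, List.ofFn_succ, ← Multiset.cons_coe, ← Fin.univ_val_map]
  exact Multiset.esymm_cons_succ _ _ _

theorem setOf_symPoly_cons_eq (n : ℕ) (a : ℂ) :
    {w | ∃ μ : Fin n → ℂ, w = symPoly (n + 1) (Fin.cons a μ)} =
      {w | ∃ z : Fin n → ℂ, w = shiftAdd a (Fin.cons 1 (Fin.snoc z 0))} := by
  ext w
  constructor
  · rintro ⟨μ, rfl⟩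
    exact ⟨symPoly n μ, symPoly_cons a μ⟩
  · rintro ⟨z, rfl⟩
    obtain ⟨μ, rfl⟩ := symPoly_surjective n z
    exact ⟨μ, (symPoly_cons a μ).symm⟩

/-- For `λ₁ ∈ ℂ`, the set `B = {π(λ₁, μ) : μ ∈ ℂⁿ}` (in `ℂ^{n+1}`) equals
`{(λ₁ + z₁, λ₁z₁ + z₂, …, λ₁z_{n-1} + z_n, λ₁ z_n) : z ∈ ℂⁿ}`, and it is a complex
affine hyperplane. -/
theorem B_eq_and_hyperplane (n : ℕ) (lam1 : ℂ)
    (B : Set (Fin (n + 1) → ℂ))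
    (hB : B = {w | ∃ μ : Fin n → ℂ, w = symPoly (n + 1) (Fin.cons lam1 μ)}) :
    B = {w | ∃ z : Fin n → ℂ,
        w = fun k : Fin (n + 1) =>
          lam1 * (Fin.cons 1 (Fin.snoc z 0) : Fin (n + 2) → ℂ) k.castSucc +
            (Fin.cons 1 (Fin.snoc z 0) : Fin (n + 2) → ℂ) k.succ} ∧
      ∃ v : Fin (n + 1) → ℂ, v ≠ 0 ∧ ∃ c : ℂ, B = {w | ∑ i, w i * v i = c} := by
  subst hB
  refine ⟨setOf_symPoly_cons_eq n lam1, fun k => (-lam1) ^ (n - (k : ℕ)), ?_,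
    -(-lam1) ^ (n + 1), ?_⟩
  · exact Function.ne_iff.mpr ⟨Fin.last n, by simp⟩
  · rw [setOf_symPoly_cons_eq, setOf_shiftAdd_cons_one_snoc_zero]
end

section
/- For n ≥ 3, the symmetrized polydisc G_n is not starlike with respect to the origin: there exists a point z ∈ G_n and s ∈ (0,1) with sz ∉ G_n. -/
open Metric Finset

/-!
For `z = π_n(μ)` the polynomial `p_z(t) = 1 - z₁t + z₂t² - ⋯ + (-1)ⁿzₙtⁿ` equals `∏ (1 - μᵢt)`,
so it has no zero in the closed unit disc when `z ∈ G_n`. Since `p_{sz} = 1 + s (p_z - 1)`, taking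
`μ = (a, a, a, 0, …, 0)` gives `p_{sz}(t) = 1 + s ((1 - at)³ - 1)`, which vanishes where
`(1 - at)³ = 1 - 1/s`. For `a = 7/8`, `s = 8/9` one such root is `t = (6 + 2√3 i)/7`, of modulus
`√48/7 < 1`, so `sz ∉ G_n` although `z ∈ G_n`.
-/

noncomputable def vietaPoly (n : ℕ) (z : Fin n → ℂ) (t : ℂ) : ℂ :=
  1 + ∑ k : Fin n, (-t) ^ ((k : ℕ) + 1) * z k

theorem prod_one_sub_mul_eq_vietaPoly (n : ℕ) (μ : Fin n → ℂ) (t : ℂ) :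
    ∏ i, (1 - μ i * t) = vietaPoly n (symPoly n μ) t := by
  calc ∏ i, (1 - μ i * t)
      = ∑ s ∈ (univ : Finset (Fin n)).powerset, (-t) ^ #s * ∏ i ∈ s, μ i := by
        simp_rw [sub_eq_add_neg, ← mul_neg, mul_comm (μ _) (-t), prod_one_add, prod_mul_distrib,
          prod_const]
    _ = ∑ j ∈ range (n + 1), (-t) ^ j * ∑ s ∈ powersetCard j univ, ∏ i ∈ s, μ i := by
        rw [sum_powerset, card_univ, Fintype.card_fin]
        refine sum_congr rfl fun j _ => ?_
        rw [mul_sum]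
        exact sum_congr rfl fun s hs => by rw [(mem_powersetCard.mp hs).2]
    _ = vietaPoly n (symPoly n μ) t := by
        rw [sum_range_succ', ← Fin.sum_univ_eq_sum_range
          (fun j => (-t) ^ (j + 1) * ∑ s ∈ powersetCard (j + 1) univ, ∏ i ∈ s, μ i)]
        simp [vietaPoly, symPoly, add_comm]

theorem vietaPoly_ne_zero_of_mem_symPolydisc {n : ℕ} {z : Fin n → ℂ} (hz : z ∈ symPolydisc n)
    {t : ℂ} (ht : ‖t‖ ≤ 1) : vietaPoly n z t ≠ 0 := by
  obtain ⟨μ, hμ, rfl⟩ := hz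
  rw [← prod_one_sub_mul_eq_vietaPoly, prod_ne_zero_iff]
  intro i _ h
  have : ‖μ i * t‖ < 1 := by
    rw [norm_mul]
    nlinarith [hμ i, norm_nonneg (μ i), norm_nonneg t]
  rw [← sub_eq_zero.mp h, norm_one] at this
  exact lt_irrefl _ this

theorem vietaPoly_const_mul (n : ℕ) (c : ℂ) (z : Fin n → ℂ) (t : ℂ) :
    vietaPoly n (fun i => c * z i) t = 1 + c * (vietaPoly n z t - 1) := by
  simp only [vietaPoly, add_sub_cancel_left, mul_sum]
  congr 1
  exact sum_congr rfl fun k _ => by ring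

theorem prod_one_sub_ite_lt_mul {m n : ℕ} (hmn : m ≤ n) (a t : ℂ) :
    ∏ i : Fin n, (1 - (if (i : ℕ) < m then a else 0) * t) = (1 - a * t) ^ m := by
  have hfactor : ∀ i : Fin n, 1 - (if (i : ℕ) < m then a else 0) * t
      = if (i : ℕ) < m then 1 - a * t else 1 := fun i => by split_ifs <;> ring
  rw [prod_congr rfl fun i _ => hfactor i, prod_ite, prod_const, prod_const, one_pow, mul_one,
    Fin.card_filter_val_lt, min_eq_right hmn]

/- `1 - 7t/8 = e^{-iπ/3}/2`. -/
theorem exists_norm_lt_one_one_sub_mul_pow_three_eq :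
    ∃ t : ℂ, ‖t‖ < 1 ∧ (1 - 7 / 8 * t) ^ 3 = -1 / 8 := by
  have h3 : ((√3 : ℝ) : ℂ) ^ 2 = 3 := by
    rw [← Complex.ofReal_pow, Real.sq_sqrt (by norm_num)]
    norm_num
  refine ⟨6 / 7 + 2 * √3 / 7 * Complex.I, ?_, ?_⟩
  · have hsq : ‖6 / 7 + 2 * √3 / 7 * Complex.I‖ ^ 2 = 48 / 49 := by
      rw [Complex.sq_norm, show (6 / 7 + 2 * √3 / 7 * Complex.I : ℂ)
        = ((6 / 7 : ℝ) : ℂ) + ((2 * √3 / 7 : ℝ) : ℂ) * Complex.I by push_cast; ring,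
        Complex.normSq_add_mul_I]
      norm_num [div_pow, mul_pow]
    nlinarith [norm_nonneg (6 / 7 + 2 * √3 / 7 * Complex.I)]
  · linear_combination (3 / 64 * ((√3 : ℝ) : ℂ) ^ 2 - 1 / 64 * ((√3 : ℝ) : ℂ) ^ 3 * Complex.I)
      * Complex.I_sq + (-3 / 64 + 1 / 64 * ((√3 : ℝ) : ℂ) * Complex.I) * h3

/-- For `n ≥ 3`, the symmetrized polydisc is not starlike with respect to the origin. -/
theorem symPolydisc_not_starlike (n : ℕ) (hn : 3 ≤ n) :
    ∃ z ∈ symPolydisc n, ∃ s : ℝ, s ∈ Set.Ioo (0 : ℝ) 1 ∧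
      (fun i => (s : ℂ) * z i) ∉ symPolydisc n := by
  set μ : Fin n → ℂ := fun i => if (i : ℕ) < 3 then 7 / 8 else 0
  have hμ : ∀ i, ‖μ i‖ < 1 := fun i => by
    simp only [μ]
    split <;> norm_num
  refine ⟨symPoly n μ, ⟨μ, hμ, rfl⟩, 8 / 9, by norm_num, fun hmem => ?_⟩
  obtain ⟨t, ht, hcube⟩ := exists_norm_lt_one_one_sub_mul_pow_three_eq
  apply vietaPoly_ne_zero_of_mem_symPolydisc hmem ht.le
  rw [vietaPoly_const_mul, ← prod_one_sub_mul_eq_vietaPoly, prod_one_sub_ite_lt_mul hn, hcube]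
  norm_num
end
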